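/- arXiv:1911.12834 — 11 statements merged into one kernel-verified Lean document; each statement's English description precedes it below -/
import Mathlib

section
/- PCKV-UE satisfies ε-local differential privacy with ε = max{ε₂, ε₁ + ln(2/(1 + e^{−ε₂}))}: for any two nonempty key-value sets S₁, S₂ and every output vector y ∈ {1, −1, 0}^{d'}, the output probabilities satisfy P(y | S₁) ≤ e^{ε} · P(y | S₂). Moreover ε ≤ ε₁ + ε₂. -/
open Finset

/-- Probability that the sampled coordinate (holding value `vk ∈ [−1,1]`)
of PCKV-UE outputs `o ∈ {1, −1, 0}`. -/
noncomputable def ueSampProb (a p vk : ℝ) (o : ℤ) : ℝ :=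
  if o = 1 then a * (1 + (2*p - 1) * vk) / 2
  else if o = -1 then a * (1 - (2*p - 1) * vk) / 2
  else 1 - a

/-- Probability that a non-sampled coordinate of PCKV-UE outputs
`o ∈ {1, −1, 0}`. -/
noncomputable def ueOtherProb (b : ℝ) (o : ℤ) : ℝ :=
  if o = 1 then b / 2 else if o = -1 then b / 2 else 1 - b

/-- Probability that PCKV-UE outputs the vector `y` given that key `k` with
value `vk` was sampled: the coordinates are perturbed independently. -/
noncomputable def ueCondProb (d ℓ : ℕ) (a b p : ℝ) (k : Fin (d + ℓ)) (vk : ℝ)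
    (y : Fin (d + ℓ) → ℤ) : ℝ :=
  ueSampProb a p vk (y k) * ∏ i ∈ univ.erase k, ueOtherProb b (y i)

/-- Total probability `P(y | S)` that PCKV-UE outputs the vector `y` on the
key-value set `S` (key set `K` with values `v`): with probability
`η = |K|/max{|K|, ℓ}` a key is sampled uniformly from `K` (with its value),
and with probability `1 − η` a dummy key is sampled uniformly from
`{d+1, …, d+ℓ}` (with value `0`). -/
noncomputable def ueOutProb (d ℓ : ℕ) (a b p : ℝ) (K : Finset (Fin (d + ℓ)))
    (v : Fin (d + ℓ) → ℝ) (y : Fin (d + ℓ) → ℤ) : ℝ :=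
  ((K.card : ℝ) / max (K.card : ℝ) (ℓ : ℝ)) / (K.card : ℝ) *
      ∑ k ∈ K, ueCondProb d ℓ a b p k (v k) y
    + (1 - (K.card : ℝ) / max (K.card : ℝ) (ℓ : ℝ)) / (ℓ : ℝ) *
      ∑ k ∈ univ.filter (fun k : Fin (d + ℓ) => d ≤ (k : ℕ)),
        ueCondProb d ℓ a b p k 0 y

/-!
Put `Q = (2ap/b) · ∏ᵢ ueOtherProb b yᵢ`. Whichever key `k` and value `v ∈ [-1, 1]` are sampled,
`P(y | k, v)` differs from `Q` only in the factor of coordinate `k`, and comparing the sampled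
factor with the unsampled one gives `Q / E ≤ P(y | k, v) ≤ Q` as soon as
`E ≥ p/(1-p) = e^{ε₂}` (outputs `±1`) and `E ≥ 2p · a(1-b)/(b(1-a)) = e^{ε₁} · 2/(1+e^{-ε₂})`
(output `0`). As `P(y | S)` is a convex combination of such conditional probabilities,
`P(y | S₁) ≤ Q ≤ E · P(y | S₂)`.
-/

theorem mul_sum_add_mul_sum_le {ι : Type*} {s t : Finset ι} {f g : ι → ℝ} {w₁ w₂ C : ℝ}
    (hw₁ : 0 ≤ w₁) (hw₂ : 0 ≤ w₂) (hw : w₁ * #s + w₂ * #t = 1)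
    (hf : ∀ i ∈ s, f i ≤ C) (hg : ∀ i ∈ t, g i ≤ C) :
    w₁ * ∑ i ∈ s, f i + w₂ * ∑ i ∈ t, g i ≤ C := by
  have hfs := sum_le_card_nsmul s f C hf
  have hgt := sum_le_card_nsmul t g C hg
  rw [nsmul_eq_mul] at hfs hgt
  calc w₁ * ∑ i ∈ s, f i + w₂ * ∑ i ∈ t, g i ≤ w₁ * (#s * C) + w₂ * (#t * C) := by gcongr
    _ = C := by linear_combination C * hw

theorem le_mul_sum_add_mul_sum {ι : Type*} {s t : Finset ι} {f g : ι → ℝ} {w₁ w₂ C : ℝ}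
    (hw₁ : 0 ≤ w₁) (hw₂ : 0 ≤ w₂) (hw : w₁ * #s + w₂ * #t = 1)
    (hf : ∀ i ∈ s, C ≤ f i) (hg : ∀ i ∈ t, C ≤ g i) :
    C ≤ w₁ * ∑ i ∈ s, f i + w₂ * ∑ i ∈ t, g i := by
  have hfs := card_nsmul_le_sum s f C hf
  have hgt := card_nsmul_le_sum t g C hg
  rw [nsmul_eq_mul] at hfs hgt
  calc C = w₁ * (#s * C) + w₂ * (#t * C) := by linear_combination -C * hw
    _ ≤ w₁ * ∑ i ∈ s, f i + w₂ * ∑ i ∈ t, g i := by gcongr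

-- The identity also holds at `x = 0`, where the first weight is the junk value `0 / 0 = 0`.
theorem div_max_mixture_weights {x y : ℝ} (hx : 0 ≤ x) (hy : 0 < y) :
    0 ≤ x / max x y / x ∧ 0 ≤ (1 - x / max x y) / y ∧
      x / max x y / x * x + (1 - x / max x y) / y * y = 1 := by
  have hmax : 0 < max x y := lt_max_of_lt_right hy
  refine ⟨by positivity, div_nonneg ?_ hy.le, ?_⟩
  · exact sub_nonneg.2 (div_le_one_of_le₀ (le_max_left x y) hmax.le)
  · rw [div_mul_cancel_of_imp fun h => by simp [h], div_mul_cancel₀ _ hy.ne']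
    ring

theorem card_filter_le_val (d ℓ : ℕ) : #{k : Fin (d + ℓ) | d ≤ (k : ℕ)} = ℓ := by
  have h := card_filter_add_card_filter_not (s := univ) fun k : Fin (d + ℓ) => (k : ℕ) < d
  rw [Fin.card_filter_val_lt] at h
  simp only [not_lt, card_univ, Fintype.card_fin] at h
  omega

section

variable {d ℓ : ℕ} {a b p : ℝ} {K : Finset (Fin (d + ℓ))} {v : Fin (d + ℓ) → ℝ}
  {y : Fin (d + ℓ) → ℤ} {C : ℝ}

theorem ueOutProb_le (hℓ : 1 ≤ ℓ) (hK : ∀ k ∈ K, ueCondProb d ℓ a b p k (v k) y ≤ C)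
    (hdummy : ∀ k : Fin (d + ℓ), d ≤ (k : ℕ) → ueCondProb d ℓ a b p k 0 y ≤ C) :
    ueOutProb d ℓ a b p K v y ≤ C := by
  obtain ⟨hw₁, hw₂, hw⟩ := div_max_mixture_weights (Nat.cast_nonneg #K)
    (Nat.cast_pos.2 hℓ)
  exact mul_sum_add_mul_sum_le hw₁ hw₂ (by rwa [card_filter_le_val]) hK
    fun k hk => hdummy k (mem_filter.1 hk).2

theorem le_ueOutProb (hℓ : 1 ≤ ℓ) (hK : ∀ k ∈ K, C ≤ ueCondProb d ℓ a b p k (v k) y)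
    (hdummy : ∀ k : Fin (d + ℓ), d ≤ (k : ℕ) → C ≤ ueCondProb d ℓ a b p k 0 y) :
    C ≤ ueOutProb d ℓ a b p K v y := by
  obtain ⟨hw₁, hw₂, hw⟩ := div_max_mixture_weights (Nat.cast_nonneg #K)
    (Nat.cast_pos.2 hℓ)
  exact le_mul_sum_add_mul_sum hw₁ hw₂ (by rwa [card_filter_le_val]) hK
    fun k hk => hdummy k (mem_filter.1 hk).2

theorem ueSampProb_le_mul_ueOtherProb (hb₀ : 0 < b) (hb₁ : b ≤ 1) (hba : b ≤ a)
    (hp : 1 / 2 ≤ p) {vk : ℝ} (hvk : vk ∈ Set.Icc (-1 : ℝ) 1) (o : ℤ) :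
    ueSampProb a p vk o ≤ 2 * a * p / b * ueOtherProb b o := by
  have ha : 0 ≤ a := hb₀.le.trans hba
  have hp' : 0 ≤ 2 * p - 1 := by linarith
  have hsign : ∀ w ≤ 1, a * (1 + (2 * p - 1) * w) / 2 ≤ 2 * a * p / b * (b / 2) := by
    intro w hw
    rw [show 2 * a * p / b * (b / 2) = a * p by field_simp]
    nlinarith [mul_nonneg (mul_nonneg ha hp') (sub_nonneg.2 hw)]
  unfold ueSampProb ueOtherProb
  split_ifs
  · exact hsign vk hvk.2
  · simpa [sub_eq_add_neg] using hsign (-vk) (by linarith [hvk.1])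
  · rw [div_mul_eq_mul_div, le_div_iff₀ hb₀]
    nlinarith [mul_nonneg (mul_nonneg ha hp') (sub_nonneg.2 hb₁)]

theorem mul_ueOtherProb_le_mul_ueSampProb (ha₀ : 0 ≤ a) (ha₁ : a < 1) (hb₀ : 0 < b)
    (hp₀ : 1 / 2 ≤ p) (hp₁ : p < 1) {vk E : ℝ} (hvk : vk ∈ Set.Icc (-1 : ℝ) 1)
    (hE₂ : p / (1 - p) ≤ E) (hE₁ : 2 * p * (a * (1 - b) / (b * (1 - a))) ≤ E) (o : ℤ) :
    2 * a * p / b * ueOtherProb b o ≤ E * ueSampProb a p vk o := by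
  have hE : 0 ≤ E := (div_nonneg (by linarith) (by linarith)).trans hE₂
  have hsign : ∀ w ≥ -1, 2 * a * p / b * (b / 2) ≤ E * (a * (1 + (2 * p - 1) * w) / 2) := by
    intro w hw
    calc 2 * a * p / b * (b / 2) = p / (1 - p) * (a * (1 - p)) := by
          field_simp [(by linarith : 1 - p ≠ 0)]
      _ ≤ E * (a * (1 - p)) := by gcongr
      _ ≤ E * (a * (1 + (2 * p - 1) * w) / 2) := by
          gcongr
          have hp' : 0 ≤ 2 * p - 1 := by linarith
          nlinarith [mul_nonneg ha₀ (mul_nonneg hp' (neg_le_iff_add_nonneg'.1 hw))]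
  unfold ueSampProb ueOtherProb
  split_ifs
  · exact hsign vk hvk.1
  · simpa [sub_eq_add_neg] using hsign (-vk) (by linarith [hvk.2])
  · calc 2 * a * p / b * (1 - b) = 2 * p * (a * (1 - b) / (b * (1 - a))) * (1 - a) := by
          field_simp [(by linarith : 1 - a ≠ 0)]
      _ ≤ E * (1 - a) := by gcongr

theorem ueOtherProb_nonneg (hb₀ : 0 ≤ b) (hb₁ : b ≤ 1) (o : ℤ) : 0 ≤ ueOtherProb b o := by
  unfold ueOtherProb
  split_ifs <;> linarith

theorem ueCondProb_le_of_le (hb₀ : 0 ≤ b) (hb₁ : b ≤ 1) {k : Fin (d + ℓ)} {vk c : ℝ}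
    (h : ueSampProb a p vk (y k) ≤ c * ueOtherProb b (y k)) :
    ueCondProb d ℓ a b p k vk y ≤ c * ∏ i, ueOtherProb b (y i) := by
  rw [← mul_prod_erase univ _ (mem_univ k), ueCondProb, ← mul_assoc]
  exact mul_le_mul_of_nonneg_right h (prod_nonneg fun i _ => ueOtherProb_nonneg hb₀ hb₁ _)

theorem le_ueCondProb_of_le (hb₀ : 0 ≤ b) (hb₁ : b ≤ 1) {k : Fin (d + ℓ)} {vk c E : ℝ}
    (h : c * ueOtherProb b (y k) ≤ E * ueSampProb a p vk (y k)) :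
    c * ∏ i, ueOtherProb b (y i) ≤ E * ueCondProb d ℓ a b p k vk y := by
  rw [← mul_prod_erase univ _ (mem_univ k), ueCondProb, ← mul_assoc, ← mul_assoc]
  exact mul_le_mul_of_nonneg_right h (prod_nonneg fun i _ => ueOtherProb_nonneg hb₀ hb₁ _)

end

theorem exp_eq_div_one_sub_of_eq_exp_div {x p : ℝ} (h : p = Real.exp x / (Real.exp x + 1)) :
    Real.exp x = p / (1 - p) := by
  subst h
  field_simp
  ring

theorem two_div_one_add_exp_neg_eq {x p : ℝ} (h : p = Real.exp x / (Real.exp x + 1)) :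
    2 / (1 + Real.exp (-x)) = 2 * p := by
  subst h
  rw [Real.exp_neg]
  field_simp

theorem ratio_bounds_le_exp_max {a b p ε₁ ε₂ : ℝ}
    (he1 : Real.exp ε₁ = a * (1 - b) / (b * (1 - a)))
    (he2 : p = Real.exp ε₂ / (Real.exp ε₂ + 1)) :
    p / (1 - p) ≤ Real.exp (max ε₂ (ε₁ + Real.log (2 / (1 + Real.exp (-ε₂))))) ∧
      2 * p * (a * (1 - b) / (b * (1 - a)))
        ≤ Real.exp (max ε₂ (ε₁ + Real.log (2 / (1 + Real.exp (-ε₂))))) := by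
  refine ⟨?_, ?_⟩
  · rw [← exp_eq_div_one_sub_of_eq_exp_div he2]
    exact Real.exp_le_exp.2 (le_max_left _ _)
  · calc 2 * p * (a * (1 - b) / (b * (1 - a)))
        = Real.exp (ε₁ + Real.log (2 / (1 + Real.exp (-ε₂)))) := by
          rw [Real.exp_add, Real.exp_log (by positivity), two_div_one_add_exp_neg_eq he2, he1]
          ring
      _ ≤ _ := Real.exp_le_exp.2 (le_max_right _ _)

theorem log_two_div_one_add_exp_neg_le {x : ℝ} (hx : 0 ≤ x) :
    Real.log (2 / (1 + Real.exp (-x))) ≤ x := by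
  rw [Real.log_le_iff_le_exp (by positivity), div_le_iff₀ (by positivity), mul_add,
    ← Real.exp_add, add_neg_cancel, Real.exp_zero]
  linarith [Real.add_one_le_exp x]

theorem pckv_ue_ldp_general (d ℓ : ℕ) (hℓ : 1 ≤ ℓ)
    (a b p ε₁ ε₂ : ℝ)
    (ha : a ∈ Set.Ico (1/2 : ℝ) 1) (hp : p ∈ Set.Ico (1/2 : ℝ) 1)
    (hb : b ∈ Set.Ioc (0 : ℝ) (1/2))
    (hε₁ : 0 ≤ ε₁) (hε₂ : 0 ≤ ε₂)
    (he1 : Real.exp ε₁ = a * (1 - b) / (b * (1 - a)))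
    (he2 : p = Real.exp ε₂ / (Real.exp ε₂ + 1))
    (K₁ K₂ : Finset (Fin (d + ℓ)))
    (v₁ v₂ : Fin (d + ℓ) → ℝ)
    (hv₁ : ∀ i ∈ K₁, v₁ i ∈ Set.Icc (-1 : ℝ) 1)
    (hv₂ : ∀ i ∈ K₂, v₂ i ∈ Set.Icc (-1 : ℝ) 1)
    (y : Fin (d + ℓ) → ℤ) :
    ueOutProb d ℓ a b p K₁ v₁ y
      ≤ Real.exp (max ε₂ (ε₁ + Real.log (2 / (1 + Real.exp (-ε₂))))) *
        ueOutProb d ℓ a b p K₂ v₂ y ∧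
    max ε₂ (ε₁ + Real.log (2 / (1 + Real.exp (-ε₂)))) ≤ ε₁ + ε₂ := by
  obtain ⟨ha₀, ha₁⟩ := ha
  obtain ⟨hp₀, hp₁⟩ := hp
  obtain ⟨hb₀, hb₁⟩ := hb
  have hb₁' : b ≤ 1 := by linarith
  obtain ⟨hE₂, hE₁⟩ := ratio_bounds_le_exp_max he1 he2
  set ε := max ε₂ (ε₁ + Real.log (2 / (1 + Real.exp (-ε₂))))
  set Q := 2 * a * p / b * ∏ i, ueOtherProb b (y i)
  have hupper (k : Fin (d + ℓ)) (vk : ℝ) (hvk : vk ∈ Set.Icc (-1 : ℝ) 1) :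
      ueCondProb d ℓ a b p k vk y ≤ Q :=
    ueCondProb_le_of_le hb₀.le hb₁'
      (ueSampProb_le_mul_ueOtherProb hb₀ hb₁' (by linarith) hp₀ hvk _)
  have hlower (k : Fin (d + ℓ)) (vk : ℝ) (hvk : vk ∈ Set.Icc (-1 : ℝ) 1) :
      Q / Real.exp ε ≤ ueCondProb d ℓ a b p k vk y :=
    (div_le_iff₀' (Real.exp_pos ε)).2 <| le_ueCondProb_of_le hb₀.le hb₁'
      (mul_ueOtherProb_le_mul_ueSampProb (by linarith) ha₁ hb₀ hp₀ hp₁ hvk hE₂ hE₁ _)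
  have h0 : (0 : ℝ) ∈ Set.Icc (-1 : ℝ) 1 := by norm_num
  refine ⟨?_, max_le (by linarith) (by linarith [log_two_div_one_add_exp_neg_le hε₂])⟩
  calc ueOutProb d ℓ a b p K₁ v₁ y ≤ Q :=
        ueOutProb_le hℓ (fun k hk => hupper k _ (hv₁ k hk)) fun k _ => hupper k 0 h0
    _ ≤ Real.exp ε * ueOutProb d ℓ a b p K₂ v₂ y := (div_le_iff₀' (Real.exp_pos ε)).1 <|
        le_ueOutProb hℓ (fun k hk => hlower k _ (hv₂ k hk)) fun k _ => hlower k 0 h0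

/-- **Budget composition of PCKV-UE.** If the key perturbation probabilities
`a ∈ [1/2, 1)`, `b ∈ (0, 1/2]` and the value perturbation probability
`p ∈ [1/2, 1)` correspond to budgets `ε₁, ε₂ ≥ 0` via
`e^{ε₁} = a(1−b)/(b(1−a))` and `p = e^{ε₂}/(e^{ε₂}+1)`, then PCKV-UE
satisfies `ε`-LDP with `ε = max{ε₂, ε₁ + ln(2/(1+e^{−ε₂}))}`: for any two
nonempty key-value sets and any output `y ∈ {1, −1, 0}^{d+ℓ}`,
`P(y | S₁) ≤ e^ε · P(y | S₂)`. Moreover `ε ≤ ε₁ + ε₂`. -/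
theorem pckv_ue_ldp (d ℓ : ℕ) (hd : 1 ≤ d) (hℓ : 1 ≤ ℓ)
    (a b p ε₁ ε₂ : ℝ)
    (ha : a ∈ Set.Ico (1/2 : ℝ) 1) (hp : p ∈ Set.Ico (1/2 : ℝ) 1)
    (hb : b ∈ Set.Ioc (0 : ℝ) (1/2))
    (hε₁ : 0 ≤ ε₁) (hε₂ : 0 ≤ ε₂)
    (he1 : Real.exp ε₁ = a * (1 - b) / (b * (1 - a)))
    (he2 : p = Real.exp ε₂ / (Real.exp ε₂ + 1))
    (K₁ K₂ : Finset (Fin (d + ℓ))) (hK₁ : K₁.Nonempty) (hK₂ : K₂.Nonempty)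
    (hK₁d : ∀ i ∈ K₁, (i : ℕ) < d) (hK₂d : ∀ i ∈ K₂, (i : ℕ) < d)
    (v₁ v₂ : Fin (d + ℓ) → ℝ)
    (hv₁ : ∀ i ∈ K₁, v₁ i ∈ Set.Icc (-1 : ℝ) 1)
    (hv₂ : ∀ i ∈ K₂, v₂ i ∈ Set.Icc (-1 : ℝ) 1)
    (y : Fin (d + ℓ) → ℤ) (hy : ∀ i, y i = 1 ∨ y i = -1 ∨ y i = 0) :
    ueOutProb d ℓ a b p K₁ v₁ y
      ≤ Real.exp (max ε₂ (ε₁ + Real.log (2 / (1 + Real.exp (-ε₂))))) *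
        ueOutProb d ℓ a b p K₂ v₂ y ∧
    max ε₂ (ε₁ + Real.log (2 / (1 + Real.exp (-ε₂)))) ≤ ε₁ + ε₂ :=
  pckv_ue_ldp_general d ℓ hℓ a b p ε₁ ε₂ ha hp hb hε₁ hε₂ he1 he2 K₁ K₂ v₁ v₂ hv₁ hv₂ y
end

section
/- Let a, p ∈ [1/2, 1) and b ∈ (0, 1/2] with e^{ε₁} = a(1−b)/(b(1−a)) and p = e^{ε₂}/(e^{ε₂}+1) for ε₁, ε₂ ≥ 0. Then (2pa/b) / min{(1−a)/(1−b), 2(1−p)a/b} = max{2e^{ε₁}/(1 + e^{−ε₂}), e^{ε₂}} = e^{max{ε₂, ε₁ + ln(2/(1+e^{−ε₂}))}}. -/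
/-! `p` is the logistic sigmoid of `ε₂`, so the two quotients of `Ψ_upper` by the candidates for
`Ψ_lower` are `2 p e^{ε₁} = 2 e^{ε₁} / (1 + e^{-ε₂})` and `p / (1 - p) = e^{ε₂}`; since everything
is positive, dividing by the minimum gives the maximum of these quotients. -/

open Real

lemma div_min_eq_max_div {α : Type*} [Field α] [LinearOrder α] [IsStrictOrderedRing α]
    {x y z : α} (hx : 0 ≤ x) (hy : 0 < y) (hz : 0 < z) :
    x / min y z = max (x / y) (x / z) := by
  rcases le_total y z with h | h
  · rw [min_eq_left h, max_eq_left (div_le_div_of_nonneg_left hx hy h)]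
  · rw [min_eq_right h, max_eq_right (div_le_div_of_nonneg_left hx hz h)]

namespace Real

lemma exp_div_exp_add_one (x : ℝ) : exp x / (exp x + 1) = sigmoid x := by
  rw [sigmoid_def, exp_neg]
  field_simp

lemma sigmoid_div_one_sub_sigmoid (x : ℝ) : sigmoid x / (1 - sigmoid x) = exp x := by
  rw [← sigmoid_neg, ← sigmoid_mul_rexp_neg, div_mul_cancel_left₀ (sigmoid_pos x).ne', exp_neg,
    inv_inv]

end Real

theorem pckv_ue_ratio_eq_general (a p b ε₁ ε₂ : ℝ)
    (ha : a ∈ Set.Ico (1/2 : ℝ) 1)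
    (hb : b ∈ Set.Ioc (0 : ℝ) (1/2))
    (he1 : Real.exp ε₁ = a * (1 - b) / (b * (1 - a)))
    (he2 : p = Real.exp ε₂ / (Real.exp ε₂ + 1)) :
    (2 * p * a / b) / min ((1 - a) / (1 - b)) (2 * (1 - p) * a / b)
      = max (2 * Real.exp ε₁ / (1 + Real.exp (-ε₂))) (Real.exp ε₂) ∧
    max (2 * Real.exp ε₁ / (1 + Real.exp (-ε₂))) (Real.exp ε₂)
      = Real.exp (max ε₂ (ε₁ + Real.log (2 / (1 + Real.exp (-ε₂))))) := by
  obtain ⟨ha₀, ha₁⟩ := ha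
  obtain ⟨hb₀, hb₁⟩ := hb
  rw [exp_div_exp_add_one] at he2
  subst he2
  have hσ : 0 < sigmoid ε₂ := sigmoid_pos ε₂
  have hσ' : 0 < 1 - sigmoid ε₂ := sub_pos.2 (sigmoid_lt_one ε₂)
  have hratio_fst : 2 * sigmoid ε₂ * a / b / ((1 - a) / (1 - b))
      = 2 * exp ε₁ / (1 + exp (-ε₂)) := by
    rw [he1, sigmoid_def]
    field_simp
  have hratio_snd : 2 * sigmoid ε₂ * a / b / (2 * (1 - sigmoid ε₂) * a / b) = exp ε₂ := by
    rw [← sigmoid_div_one_sub_sigmoid]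
    field_simp
  constructor
  · rw [div_min_eq_max_div (by positivity) (div_pos (by linarith) (by linarith))
      (div_pos (mul_pos (mul_pos two_pos hσ') (by linarith)) hb₀), hratio_fst, hratio_snd]
  · rw [max_comm, exp_monotone.map_max, exp_add, exp_log (by positivity),
      ← mul_div_assoc, mul_comm (exp ε₁)]

/-- The ratio `Ψ_upper / Ψ_lower` in the LDP analysis of PCKV-UE equals
`max {2e^{ε₁}/(1 + e^{−ε₂}), e^{ε₂}}`, which is the exponential of the total
budget `max {ε₂, ε₁ + ln(2/(1+e^{−ε₂}))}`. -/
theorem pckv_ue_ratio_eq (a p b ε₁ ε₂ : ℝ)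
    (ha : a ∈ Set.Ico (1/2 : ℝ) 1) (hp : p ∈ Set.Ico (1/2 : ℝ) 1)
    (hb : b ∈ Set.Ioc (0 : ℝ) (1/2))
    (hε₁ : 0 ≤ ε₁) (hε₂ : 0 ≤ ε₂)
    (he1 : Real.exp ε₁ = a * (1 - b) / (b * (1 - a)))
    (he2 : p = Real.exp ε₂ / (Real.exp ε₂ + 1)) :
    (2 * p * a / b) / min ((1 - a) / (1 - b)) (2 * (1 - p) * a / b)
      = max (2 * Real.exp ε₁ / (1 + Real.exp (-ε₂))) (Real.exp ε₂) ∧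
    max (2 * Real.exp ε₁ / (1 + Real.exp (-ε₂))) (Real.exp ε₂)
      = Real.exp (max ε₂ (ε₁ + Real.log (2 / (1 + Real.exp (-ε₂))))) :=
  pckv_ue_ratio_eq_general a p b ε₁ ε₂ ha hb he1 he2
end

section
/- Let a = e^{ε₁}/(e^{ε₁}+d'−1), b = 1/(e^{ε₁}+d'−1), p = e^{ε₂}/(e^{ε₂}+1) with ε₁, ε₂ ≥ 0, d' ≥ 2, and let ℓ ≥ 1, λ = (ℓ−1)(e^{ε₂}+1)/2. Then ((1/ℓ)ap + (1−1/ℓ)(b/2)) / ((1/ℓ)a(1−p) + (1−1/ℓ)(b/2)) = (e^{ε₁+ε₂} + λ)/(e^{ε₁} + λ), and ((1/ℓ)ap + (1−1/ℓ)(b/2)) / (b/2) = (e^{ε₁+ε₂} + λ)/(ℓ(e^{ε₂}+1)/2). -/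
set_option maxHeartbeats 1000000 in
/-- The two probability-ratio identities in the LDP analysis of PCKV-GRR:
with `a = e^{ε₁}/(e^{ε₁}+d'−1)`, `b = 1/(e^{ε₁}+d'−1)`,
`p = e^{ε₂}/(e^{ε₂}+1)` and `λ = (ℓ−1)(e^{ε₂}+1)/2`, the ratio of
`Φ_upper = (1/ℓ)ap + (1−1/ℓ)(b/2)` to the two lower bounds equals
`(e^{ε₁+ε₂}+λ)/(e^{ε₁}+λ)` and `(e^{ε₁+ε₂}+λ)/(ℓ(e^{ε₂}+1)/2)`. -/
theorem pckv_grr_ratio_identities (ε₁ ε₂ : ℝ) (hε₁ : 0 ≤ ε₁) (hε₂ : 0 ≤ ε₂)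
    (d' ℓ : ℕ) (hd' : 2 ≤ d') (hℓ : 1 ≤ ℓ)
    (a b p lam : ℝ)
    (ha : a = Real.exp ε₁ / (Real.exp ε₁ + (d' : ℝ) - 1))
    (hb : b = 1 / (Real.exp ε₁ + (d' : ℝ) - 1))
    (hp : p = Real.exp ε₂ / (Real.exp ε₂ + 1))
    (hlam : lam = ((ℓ : ℝ) - 1) * (Real.exp ε₂ + 1) / 2) :
    ((1 / (ℓ : ℝ)) * a * p + (1 - 1 / (ℓ : ℝ)) * (b / 2)) /
        ((1 / (ℓ : ℝ)) * a * (1 - p) + (1 - 1 / (ℓ : ℝ)) * (b / 2))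
      = (Real.exp (ε₁ + ε₂) + lam) / (Real.exp ε₁ + lam) ∧
    ((1 / (ℓ : ℝ)) * a * p + (1 - 1 / (ℓ : ℝ)) * (b / 2)) / (b / 2)
      = (Real.exp (ε₁ + ε₂) + lam) / ((ℓ : ℝ) * (Real.exp ε₂ + 1) / 2) := by
  have hE1 : (0:ℝ) < Real.exp ε₁ := Real.exp_pos _
  have hE2 : (0:ℝ) < Real.exp ε₂ := Real.exp_pos _
  have hL : (1:ℝ) ≤ (ℓ:ℝ) := by exact_mod_cast hℓ
  have hLpos : (0:ℝ) < (ℓ:ℝ) := by linarith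
  have hD : (0:ℝ) < Real.exp ε₁ + (d' : ℝ) - 1 := by
    have : (2:ℝ) ≤ (d':ℝ) := by exact_mod_cast hd'
    linarith
  have hE2p : (0:ℝ) < Real.exp ε₂ + 1 := by linarith
  have hlam0 : 0 ≤ lam := by
    rw [hlam]; nlinarith [hL, hE2p]
  have hden1 : (0:ℝ) < (1 / (ℓ : ℝ)) * a * (1 - p) + (1 - 1 / (ℓ : ℝ)) * (b / 2) := by
    have h1p : 0 < 1 - p := by
      rw [hp]; rw [sub_pos, div_lt_one hE2p]; linarith
    have ha0 : 0 < a := by rw [ha]; positivity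
    have hb0 : 0 < b := by rw [hb]; positivity
    have h1 : 0 < (1 / (ℓ : ℝ)) * a * (1 - p) := by positivity
    have h2 : 0 ≤ (1 - 1 / (ℓ : ℝ)) * (b / 2) := by
      have : 1 / (ℓ:ℝ) ≤ 1 := by
        rw [div_le_one hLpos]; exact hL
      nlinarith
    linarith
  have hE1lam : (0:ℝ) < Real.exp ε₁ + lam := by linarith
  have hexp : Real.exp (ε₁ + ε₂) = Real.exp ε₁ * Real.exp ε₂ := Real.exp_add _ _
  subst ha hb hp hlam
  constructor
  · rw [hexp, div_eq_div_iff hden1.ne' hE1lam.ne']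
    field_simp
    ring
  · rw [hexp]
    have hb2 : ((1:ℝ) / (Real.exp ε₁ + (d' : ℝ) - 1)) / 2 ≠ 0 := by positivity
    rw [div_eq_div_iff hb2 (by positivity : ((ℓ:ℝ) * (Real.exp ε₂ + 1) / 2) ≠ 0)]
    field_simp
end

section
/- Under the per-user reporting model below, the frequency estimator f̂ = ℓ·((n₁+n₂)/n − b)/(a−b) is unbiased: E[f̂] = f*, where f* = |U_k|/n is the true frequency of key k. -/
open MeasureTheory ProbabilityTheory

/-! By linearity of expectation, `E[n₁ + n₂]` is the sum over users of the probability of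
reporting support for `1` or `−1`. That probability is `a/ℓ + (1 - 1/ℓ) b` for a user holding
the key and `b` otherwise, so `E[n₁ + n₂] = n b + |U_k| (a - b)/ℓ`, and the estimator is the
affine map that inverts this relation. -/

lemma ite_one_eq_indicator {Ω : Type*} (P : Ω → Prop) [DecidablePred P] :
    (fun ω => if P ω then (1 : ℝ) else 0) = {ω | P ω}.indicator 1 := by
  funext ω; simp [Set.indicator_apply]

section Expectation

variable {Ω : Type*} [MeasurableSpace Ω] {μ : Measure Ω}

lemma integrable_ite_one [IsFiniteMeasure μ] {P : Ω → Prop} [DecidablePred P]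
    (hP : MeasurableSet {ω | P ω}) : Integrable (fun ω => if P ω then (1 : ℝ) else 0) μ := by
  rw [ite_one_eq_indicator]
  exact (integrable_const 1).indicator hP

lemma integral_sum_ite_one_eq_sum_measureReal [IsFiniteMeasure μ] {ι : Type*} [Fintype ι]
    (P : ι → Ω → Prop) [∀ i, DecidablePred (P i)] (hP : ∀ i, MeasurableSet {ω | P i ω}) :
    ∫ ω, ∑ i, (if P i ω then (1 : ℝ) else 0) ∂μ = ∑ i, μ.real {ω | P i ω} := by
  rw [integral_finsetSum _ fun i _ => integrable_ite_one (hP i)]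
  exact Finset.sum_congr rfl fun i _ => by rw [ite_one_eq_indicator, integral_indicator_one (hP i)]

lemma integral_mul_div_sub_div [IsProbabilityMeasure μ] {f : Ω → ℝ} (hf : Integrable f μ)
    (c m d e : ℝ) :
    ∫ ω, c * ((f ω / m - d) / e) ∂μ = c * (((∫ ω, f ω ∂μ) / m - d) / e) := by
  rw [integral_const_mul, integral_div, integral_sub (hf.div_const m) (integrable_const d),
    integral_div, integral_const, probReal_univ, one_smul]

end Expectation

lemma measureReal_eq_of_eq_ofReal {Ω : Type*} [MeasurableSpace Ω] {μ : Measure Ω} {s : Set Ω}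
    {x : ℝ} (h : μ s = ENNReal.ofReal x) (hx : 0 ≤ x) : μ.real s = x := by
  rw [measureReal_def, h, ENNReal.toReal_ofReal hx]

lemma Finset.sum_eq_card_mul_add_card_compl_mul {ι : Type*} [Fintype ι] [DecidableEq ι]
    (s : Finset ι) {g : ι → ℝ} {c d : ℝ} (hin : ∀ i ∈ s, g i = c) (hout : ∀ i ∉ s, g i = d) :
    ∑ i, g i = s.card * c + (Fintype.card ι - s.card) * d := by
  rw [← Finset.sum_add_sum_compl s, Finset.sum_congr rfl hin,
    Finset.sum_congr rfl fun i hi => hout i (Finset.mem_compl.1 hi), Finset.sum_const,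
    Finset.sum_const, Finset.card_compl, nsmul_eq_mul, nsmul_eq_mul,
    Nat.cast_sub s.card_le_univ]

lemma mixture_nonneg {ℓ a b w : ℝ} (hℓ : 1 ≤ ℓ) (ha : 0 ≤ a) (hb : 0 ≤ b) (hw : 0 ≤ w) :
    0 ≤ 1 / ℓ * (a * w / 2) + (1 - 1 / ℓ) * (b / 2) := by
  have : 1 / ℓ ≤ 1 := (div_le_one (by linarith)).2 hℓ
  have : 0 ≤ 1 / ℓ := by positivity
  have : 0 ≤ a * w / 2 := by positivity
  nlinarith

lemma abs_two_mul_sub_one_mul_le_one {p v : ℝ} (hp0 : 0 ≤ p) (hp1 : p ≤ 1)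
    (hv : v ∈ Set.Icc (-1 : ℝ) 1) :
    |(2 * p - 1) * v| ≤ 1 := by
  rw [abs_mul]
  exact mul_le_one₀ (abs_le.2 ⟨by linarith, by linarith⟩) (abs_nonneg _) (abs_le.2 hv)

theorem pckv_frequency_unbiased_general
    (n ℓ : ℕ) (hn : 0 < n) (hℓ : 1 ≤ ℓ)
    (a b p : ℝ) (h0b : 0 < b) (hba : b < a)
    (hp : 1/2 < p) (hp1 : p < 1)
    (Uk : Finset (Fin n)) (v : Fin n → ℝ)
    (hv : ∀ u ∈ Uk, v u ∈ Set.Icc (-1 : ℝ) 1)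
    (Ω : Type) [MeasurableSpace Ω] (μ : Measure Ω) [IsProbabilityMeasure μ]
    (X : Fin n → Ω → ℤ) (hX : ∀ u, Measurable (X u))
    (h1in : ∀ u ∈ Uk, μ {ω | X u ω = 1}
      = ENNReal.ofReal ((1 / (ℓ : ℝ)) * (a * (1 + (2*p - 1) * v u) / 2)
          + (1 - 1 / (ℓ : ℝ)) * (b / 2)))
    (h2in : ∀ u ∈ Uk, μ {ω | X u ω = -1}
      = ENNReal.ofReal ((1 / (ℓ : ℝ)) * (a * (1 - (2*p - 1) * v u) / 2)
          + (1 - 1 / (ℓ : ℝ)) * (b / 2)))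
    (h1out : ∀ u ∉ Uk, μ {ω | X u ω = 1} = ENNReal.ofReal (b / 2))
    (h2out : ∀ u ∉ Uk, μ {ω | X u ω = -1} = ENNReal.ofReal (b / 2)) :
    (∫ ω, (ℓ : ℝ) *
        ((((∑ u, (if X u ω = 1 then (1 : ℝ) else 0)) +
           (∑ u, (if X u ω = -1 then (1 : ℝ) else 0))) / (n : ℝ) - b)
          / (a - b)) ∂μ)
      = (Uk.card : ℝ) / (n : ℝ) := by
  have hlevel : ∀ c : ℤ, ∀ u, MeasurableSet {ω | X u ω = c} :=
    fun c u => hX u (measurableSet_singleton c)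
  have hint : ∀ c : ℤ, Integrable (fun ω => ∑ u, if X u ω = c then (1 : ℝ) else 0) μ :=
    fun c => integrable_finsetSum _ fun u _ => integrable_ite_one (hlevel c u)
  have hin : ∀ u ∈ Uk, μ.real {ω | X u ω = 1} + μ.real {ω | X u ω = -1}
      = 1 / (ℓ : ℝ) * a + (1 - 1 / (ℓ : ℝ)) * b := by
    intro u hu
    have hq := abs_le.1 (abs_two_mul_sub_one_mul_le_one (by linarith) hp1.le (hv u hu))
    have hℓ' : (1 : ℝ) ≤ ℓ := by exact_mod_cast hℓ
    rw [measureReal_eq_of_eq_ofReal (h1in u hu)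
        (mixture_nonneg hℓ' (by linarith) h0b.le (by linarith)),
      measureReal_eq_of_eq_ofReal (h2in u hu)
        (mixture_nonneg hℓ' (by linarith) h0b.le (by linarith))]
    ring
  have hout : ∀ u ∉ Uk, μ.real {ω | X u ω = 1} + μ.real {ω | X u ω = -1} = b := by
    intro u hu
    rw [measureReal_eq_of_eq_ofReal (h1out u hu) (by positivity),
      measureReal_eq_of_eq_ofReal (h2out u hu) (by positivity), add_halves]
  rw [integral_mul_div_sub_div ((hint 1).fun_add (hint (-1))), integral_add (hint 1) (hint (-1)),
    integral_sum_ite_one_eq_sum_measureReal _ (hlevel 1),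
    integral_sum_ite_one_eq_sum_measureReal _ (hlevel (-1)), ← Finset.sum_add_distrib,
    Finset.sum_eq_card_mul_add_card_compl_mul Uk hin hout, Fintype.card_fin]
  have : (ℓ : ℝ) ≠ 0 := by positivity
  have : a - b ≠ 0 := by linarith
  field_simp
  ring

/-- Unbiasedness of the PCKV frequency estimator. Each of `n` users reports
support for `1`, for `−1`, or for neither (encoded as an integer-valued random
variable `X u` with values `1`, `−1`, `0`): a user `u` possessing key `k`
(i.e. `u ∈ Uk`, with value `v u ∈ [−1,1]`) supports `1` with probability
`(1/ℓ)·a(1+(2p−1)v_u)/2 + (1−1/ℓ)·(b/2)` and `−1` with probability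
`(1/ℓ)·a(1−(2p−1)v_u)/2 + (1−1/ℓ)·(b/2)`, while a user not possessing key `k`
supports each of `1`, `−1` with probability `b/2`; the reports are independent
across users. Then the frequency estimator
`f̂ = ℓ·((n₁+n₂)/n − b)/(a−b)` satisfies `E[f̂] = f* = |Uk|/n`. -/
theorem pckv_frequency_unbiased
    (n ℓ : ℕ) (hn : 0 < n) (hℓ : 1 ≤ ℓ)
    (a b p : ℝ) (h0b : 0 < b) (hba : b < a) (ha1 : a < 1)
    (hp : 1/2 < p) (hp1 : p < 1)
    (Uk : Finset (Fin n)) (v : Fin n → ℝ)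
    (hv : ∀ u ∈ Uk, v u ∈ Set.Icc (-1 : ℝ) 1)
    (Ω : Type) [MeasurableSpace Ω] (μ : Measure Ω) [IsProbabilityMeasure μ]
    (X : Fin n → Ω → ℤ) (hX : ∀ u, Measurable (X u))
    (hind : iIndepFun X μ)
    (hXrange : ∀ u ω, X u ω = 1 ∨ X u ω = -1 ∨ X u ω = 0)
    (h1in : ∀ u ∈ Uk, μ {ω | X u ω = 1}
      = ENNReal.ofReal ((1 / (ℓ : ℝ)) * (a * (1 + (2*p - 1) * v u) / 2)
          + (1 - 1 / (ℓ : ℝ)) * (b / 2)))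
    (h2in : ∀ u ∈ Uk, μ {ω | X u ω = -1}
      = ENNReal.ofReal ((1 / (ℓ : ℝ)) * (a * (1 - (2*p - 1) * v u) / 2)
          + (1 - 1 / (ℓ : ℝ)) * (b / 2)))
    (h1out : ∀ u ∉ Uk, μ {ω | X u ω = 1} = ENNReal.ofReal (b / 2))
    (h2out : ∀ u ∉ Uk, μ {ω | X u ω = -1} = ENNReal.ofReal (b / 2)) :
    (∫ ω, (ℓ : ℝ) *
        ((((∑ u, (if X u ω = 1 then (1 : ℝ) else 0)) +
           (∑ u, (if X u ω = -1 then (1 : ℝ) else 0))) / (n : ℝ) - b)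
          / (a - b)) ∂μ)
      = (Uk.card : ℝ) / (n : ℝ) :=
  pckv_frequency_unbiased_general n ℓ hn hℓ a b p h0b hba hp hp1 Uk v hv Ω μ X hX h1in h2in h1out
    h2out
end

section
/- Let m ≤ n be nonnegative integers and let n₁+n₂ be the sum of n independent Bernoulli random variables, m of them with success probability a and the remaining n−m with success probability b, where 0 < b < a < 1. With f* = ℓm/n, the frequency estimator f̂ = ℓ·((n₁+n₂)/n − b)/(a−b) satisfies E[f̂] = f* and Var[f̂] = ℓ²b(1−b)/(n(a−b)²) + ℓ·f*·(1−a−b)/(n(a−b)). -/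
open MeasureTheory ProbabilityTheory Finset

/-!
Up to the affine map `S ↦ ℓ (S/n - b)/(a - b)`, the estimator is the sum `S` of independent
Bernoulli variables, `m` with parameter `a` and `n - m` with parameter `b`. Hence
`E[S] = ma + (n - m)b = n b + m(a - b)` and, by independence,
`Var[S] = m a(1 - a) + (n - m) b(1 - b) = n b(1 - b) + m(a - b)(1 - a - b)`;
scaling by `ℓ/(n(a - b))` gives both formulas.
-/

structure IsBernoulli {Ω : Type*} [MeasurableSpace Ω] (X : Ω → ℝ) (p : ℝ) (μ : Measure Ω) :
    Prop where
  measurable : Measurable X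
  eq_zero_or_eq_one : ∀ ω, X ω = 0 ∨ X ω = 1
  nonneg : 0 ≤ p
  measure_eq_one : μ (X ⁻¹' {1}) = ENNReal.ofReal p

namespace IsBernoulli

variable {Ω : Type*} [MeasurableSpace Ω] {μ : Measure Ω} {X : Ω → ℝ} {p : ℝ}

lemma eq_indicator (hX : IsBernoulli X p μ) : X = (X ⁻¹' {1}).indicator 1 := by
  funext ω
  rcases hX.eq_zero_or_eq_one ω with h | h <;> simp [h]

lemma sq_eq (hX : IsBernoulli X p μ) : X ^ 2 = X := by
  funext ω
  rcases hX.eq_zero_or_eq_one ω with h | h <;> simp [h]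

lemma memLp [IsFiniteMeasure μ] (hX : IsBernoulli X p μ) (q : ENNReal) : MemLp X q μ := by
  refine memLp_of_bounded (a := 0) (b := 1) (ae_of_all _ fun ω => ?_)
    hX.measurable.aestronglyMeasurable q
  rcases hX.eq_zero_or_eq_one ω with h | h <;> simp [h]

lemma integral_eq (hX : IsBernoulli X p μ) : ∫ ω, X ω ∂μ = p := by
  rw [integral_congr_ae (ae_of_all _ (congrFun hX.eq_indicator)),
    integral_indicator_one (hX.measurable (measurableSet_singleton 1)), measureReal_def,
    hX.measure_eq_one, ENNReal.toReal_ofReal hX.nonneg]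

lemma variance_eq [IsProbabilityMeasure μ] (hX : IsBernoulli X p μ) :
    Var[X; μ] = p * (1 - p) := by
  rw [variance_eq_sub (hX.memLp 2), hX.sq_eq, hX.integral_eq]
  ring

variable {ι : Type*} {Y : ι → Ω → ℝ} {q : ι → ℝ} {s : Finset ι}

lemma integral_sum [IsFiniteMeasure μ] (hY : ∀ i ∈ s, IsBernoulli (Y i) (q i) μ) :
    ∫ ω, ∑ i ∈ s, Y i ω ∂μ = ∑ i ∈ s, q i := by
  rw [integral_finsetSum _ fun i hi => ((hY i hi).memLp 1).integrable le_rfl]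
  exact sum_congr rfl fun i hi => (hY i hi).integral_eq

lemma variance_sum [IsProbabilityMeasure μ] (hY : ∀ i ∈ s, IsBernoulli (Y i) (q i) μ)
    (hind : Set.Pairwise s fun i j => Y i ⟂ᵢ[μ] Y j) :
    Var[fun ω => ∑ i ∈ s, Y i ω; μ] = ∑ i ∈ s, q i * (1 - q i) := by
  have hsum : (fun ω => ∑ i ∈ s, Y i ω) = ∑ i ∈ s, Y i := by
    funext ω
    simp
  rw [hsum, IndepFun.variance_sum (fun i hi => (hY i hi).memLp 2) hind]
  exact sum_congr rfl fun i hi => (hY i hi).variance_eq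

end IsBernoulli

lemma Fin.sum_univ_ite_val_lt {M : Type*} [AddCommMonoid M] {n m : ℕ} (hm : m ≤ n) (x y : M) :
    ∑ i : Fin n, (if (i : ℕ) < m then x else y) = m • x + (n - m) • y := by
  rw [sum_ite, Finset.sum_const, Finset.sum_const, filter_not,
    card_sdiff_of_subset (filter_subset _ _), Fin.card_filter_val_lt, card_univ,
    Fintype.card_fin, min_eq_right hm]

theorem pckv_frequency_mean_variance_general
    (n m ℓ : ℕ) (hn : 0 < n) (hm : m ≤ n)
    (a b : ℝ) (h0b : 0 < b) (hba : b < a)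
    (Ω : Type) [MeasurableSpace Ω] (μ : Measure Ω) [IsProbabilityMeasure μ]
    (Y : Fin n → Ω → ℝ) (hY : ∀ u, Measurable (Y u))
    (hind : iIndepFun Y μ)
    (hY01 : ∀ u ω, Y u ω = 0 ∨ Y u ω = 1)
    (hpa : ∀ u : Fin n, (u : ℕ) < m → μ {ω | Y u ω = 1} = ENNReal.ofReal a)
    (hpb : ∀ u : Fin n, m ≤ (u : ℕ) → μ {ω | Y u ω = 1} = ENNReal.ofReal b)
    (fs : ℝ) (hfs : fs = (ℓ : ℝ) * (m : ℝ) / (n : ℝ)) :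
    (∫ ω, (ℓ : ℝ) * ((∑ u, Y u ω) / (n : ℝ) - b) / (a - b) ∂μ) = fs ∧
    variance (fun ω => (ℓ : ℝ) * ((∑ u, Y u ω) / (n : ℝ) - b) / (a - b)) μ
      = (ℓ : ℝ)^2 * b * (1 - b) / ((n : ℝ) * (a - b)^2)
        + (ℓ : ℝ) * fs * (1 - a - b) / ((n : ℝ) * (a - b)) := by
  have hn0 : (n : ℝ) ≠ 0 := by positivity
  have hab : a - b ≠ 0 := sub_ne_zero.mpr hba.ne'
  have hB : ∀ u ∈ univ, IsBernoulli (Y u) (if (u : ℕ) < m then a else b) μ := fun u _ => by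
    split_ifs with h
    · exact ⟨hY u, hY01 u, (h0b.trans hba).le, hpa u h⟩
    · exact ⟨hY u, hY01 u, h0b.le, hpb u (not_lt.mp h)⟩
  have hmean : ∫ ω, ∑ u, Y u ω ∂μ = m * a + (n - m) * b := by
    rw [IsBernoulli.integral_sum hB, Fin.sum_univ_ite_val_lt hm]
    simp [Nat.cast_sub hm]
  have hvar : Var[fun ω => ∑ u, Y u ω; μ] = m * (a * (1 - a)) + (n - m) * (b * (1 - b)) := by
    rw [IsBernoulli.variance_sum hB fun u _ v _ huv => hind.indepFun huv,
      sum_congr rfl fun u _ => apply_ite (fun p => p * (1 - p)) _ _ _,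
      Fin.sum_univ_ite_val_lt hm]
    simp [Nat.cast_sub hm]
  have haffine : (fun ω => (ℓ : ℝ) * ((∑ u, Y u ω) / n - b) / (a - b))
      = fun ω => ℓ / (n * (a - b)) * ∑ u, Y u ω - ℓ * b / (a - b) := by
    funext ω
    field_simp
  have hS : Integrable (fun ω => ∑ u, Y u ω) μ :=
    integrable_finsetSum _ fun u hu => ((hB u hu).memLp 1).integrable le_rfl
  rw [haffine, hfs]
  constructor
  · rw [integral_sub (hS.const_mul _) (integrable_const _), integral_const_mul, hmean,
      integral_const, probReal_univ, one_smul]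
    field_simp
    ring
  · rw [variance_sub_const (hS.const_mul _).aestronglyMeasurable, variance_const_mul, hvar]
    field_simp
    ring

/-- Expectation and variance of the PCKV frequency estimator. Let `n₁+n₂` be
the sum `S = ∑ u, Y u` of `n` independent Bernoulli random variables, `m` of
them with success probability `a` and the remaining `n−m` with success
probability `b`, where `0 < b < a < 1`. With `f* = ℓm/n`, the estimator
`f̂ = ℓ·(S/n − b)/(a−b)` satisfies `E[f̂] = f*` and
`Var[f̂] = ℓ²b(1−b)/(n(a−b)²) + ℓ·f*·(1−a−b)/(n(a−b))`. -/
theorem pckv_frequency_mean_variance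
    (n m ℓ : ℕ) (hn : 0 < n) (hm : m ≤ n) (hℓ : 1 ≤ ℓ)
    (a b : ℝ) (h0b : 0 < b) (hba : b < a) (ha1 : a < 1)
    (Ω : Type) [MeasurableSpace Ω] (μ : Measure Ω) [IsProbabilityMeasure μ]
    (Y : Fin n → Ω → ℝ) (hY : ∀ u, Measurable (Y u))
    (hind : iIndepFun Y μ)
    (hY01 : ∀ u ω, Y u ω = 0 ∨ Y u ω = 1)
    (hpa : ∀ u : Fin n, (u : ℕ) < m → μ {ω | Y u ω = 1} = ENNReal.ofReal a)
    (hpb : ∀ u : Fin n, m ≤ (u : ℕ) → μ {ω | Y u ω = 1} = ENNReal.ofReal b)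
    (fs : ℝ) (hfs : fs = (ℓ : ℝ) * (m : ℝ) / (n : ℝ)) :
    (∫ ω, (ℓ : ℝ) * ((∑ u, Y u ω) / (n : ℝ) - b) / (a - b) ∂μ) = fs ∧
    variance (fun ω => (ℓ : ℝ) * ((∑ u, Y u ω) / (n : ℝ) - b) / (a - b)) μ
      = (ℓ : ℝ)^2 * b * (1 - b) / ((n : ℝ) * (a - b)^2)
        + (ℓ : ℝ) * fs * (1 - a - b) / ((n : ℝ) * (a - b)) :=
  pckv_frequency_mean_variance_general n m ℓ hn hm a b h0b hba Ω μ Y hY hind hY01 hpa hpb fs hfs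
end

section
/- Let 0 < b < a < 1 and 1/2 < p < 1, and let A be the 2×2 matrix with diagonal entries ap − b/2 and off-diagonal entries a(1−p) − b/2. Then det(A) = a(a−b)(2p−1) > 0 (so A is invertible), and for any reals n₁*, n₂*, n, setting E₁ = n₁*·ap + n₂*·a(1−p) + (n−n₁*−n₂*)·b/2 and E₂ = n₁*·a(1−p) + n₂*·ap + (n−n₁*−n₂*)·b/2, one has A⁻¹·(E₁ − nb/2, E₂ − nb/2)ᵀ = (n₁*, n₂*)ᵀ. Consequently the estimators (n̂₁, n̂₂)ᵀ = A⁻¹·(n₁ − nb/2, n₂ − nb/2)ᵀ are unbiased for (n₁*, n₂*) whenever E[n₁] = E₁ and E[n₂] = E₂. -/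
open MeasureTheory Matrix

lemma mulVec_two (M : Matrix (Fin 2) (Fin 2) ℝ) (x y : ℝ) (i : Fin 2) :
    (M *ᵥ ![x, y]) i = M i 0 * x + M i 1 * y := by
  simp [Matrix.mulVec, dotProduct, Fin.sum_univ_two]

/-- The calibration matrix `A` of the PCKV mean estimator, with diagonal
entries `ap − b/2` and off-diagonal entries `a(1−p) − b/2`, has determinant
`a(a−b)(2p−1) > 0` (so it is invertible), inverting it recovers the true
counts from the expected observed counts, and consequently the estimators
`(n̂₁, n̂₂)ᵀ = A⁻¹(n₁ − nb/2, n₂ − nb/2)ᵀ` are unbiased whenever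
`E[n₁] = E₁` and `E[n₂] = E₂`. -/
theorem pckv_calibration_unbiased (a b p : ℝ)
    (h0b : 0 < b) (hba : b < a) (ha1 : a < 1) (hp : 1/2 < p) (hp1 : p < 1)
    (A : Matrix (Fin 2) (Fin 2) ℝ)
    (hA : A = !![a * p - b/2, a * (1 - p) - b/2;
                 a * (1 - p) - b/2, a * p - b/2])
    (n₁s n₂s n E₁ E₂ : ℝ)
    (hE₁ : E₁ = n₁s * (a * p) + n₂s * (a * (1 - p)) + (n - n₁s - n₂s) * (b/2))
    (hE₂ : E₂ = n₁s * (a * (1 - p)) + n₂s * (a * p) + (n - n₁s - n₂s) * (b/2)) :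
    (A.det = a * (a - b) * (2*p - 1) ∧ 0 < A.det ∧ IsUnit A) ∧
    A⁻¹ *ᵥ ![E₁ - n * b/2, E₂ - n * b/2] = ![n₁s, n₂s] ∧
    ∀ (Ω : Type) (_ : MeasurableSpace Ω) (μ : Measure Ω)
      (_ : IsProbabilityMeasure μ) (N₁ N₂ : Ω → ℝ),
      Integrable N₁ μ → Integrable N₂ μ →
      (∫ ω, N₁ ω ∂μ) = E₁ → (∫ ω, N₂ ω ∂μ) = E₂ →
      (∫ ω, (A⁻¹ *ᵥ ![N₁ ω - n * b/2, N₂ ω - n * b/2]) 0 ∂μ) = n₁s ∧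
      (∫ ω, (A⁻¹ *ᵥ ![N₁ ω - n * b/2, N₂ ω - n * b/2]) 1 ∂μ) = n₂s := by
  have hdet : A.det = a * (a - b) * (2*p - 1) := by
    subst hA; rw [Matrix.det_fin_two_of]; ring
  have hdetpos : 0 < A.det := by
    rw [hdet]
    have h1 : 0 < a := lt_trans h0b hba
    have h2 : 0 < a - b := sub_pos.mpr hba
    have h3 : 0 < 2*p - 1 := by linarith
    positivity
  have hunit : IsUnit A := by
    rw [Matrix.isUnit_iff_isUnit_det]
    exact hdetpos.ne'.isUnit
  have hAmul : A *ᵥ ![n₁s, n₂s] = ![E₁ - n * b/2, E₂ - n * b/2] := by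
    funext i
    fin_cases i <;>
      simp [mulVec_two, hA, hE₁, hE₂, Matrix.cons_val_zero, Matrix.cons_val_one] <;> ring
  have key : A⁻¹ *ᵥ ![E₁ - n * b/2, E₂ - n * b/2] = ![n₁s, n₂s] := by
    rw [← hAmul, Matrix.mulVec_mulVec, Matrix.nonsing_inv_mul A hdetpos.ne'.isUnit,
      Matrix.one_mulVec]
  refine ⟨⟨hdet, hdetpos, hunit⟩, key, ?_⟩
  intro Ω _ μ _ N₁ N₂ hI₁ hI₂ hEN₁ hEN₂
  have main : ∀ i : Fin 2,
      (∫ ω, (A⁻¹ *ᵥ ![N₁ ω - n * b/2, N₂ ω - n * b/2]) i ∂μ) = ![n₁s, n₂s] i := by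
    intro i
    have : (∫ ω, (A⁻¹ *ᵥ ![N₁ ω - n * b/2, N₂ ω - n * b/2]) i ∂μ)
        = A⁻¹ i 0 * (E₁ - n * b/2) + A⁻¹ i 1 * (E₂ - n * b/2) := by
      simp_rw [mulVec_two]
      rw [integral_add, integral_const_mul, integral_const_mul, integral_sub hI₁
        (integrable_const _), integral_sub hI₂ (integrable_const _),
        integral_const]
      · simp [hEN₁, hEN₂]
      · exact ((hI₁.sub (integrable_const _)).const_mul _)
      · exact ((hI₂.sub (integrable_const _)).const_mul _)
    rw [this, ← mulVec_two, key]
  exact ⟨main 0, main 1⟩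
end

section
/- Fix ε > 0, let θ₀ = (e^ε+1)/2, let g'(θ) = 4θ(θ² + (θ+2)e^ε)/((θ+1)²(e^ε − θ)³) and h'(θ) = −4(θ+1)/(θ−1)³. Then for every real m, g'(θ₀) + h'(θ₀)·m² = (16(e^ε+3)/(e^ε−1)³)·(Ψ(ε) − m²), where Ψ(ε) = (e^ε+1)(3e^{2ε}+12e^ε+1)/(e^ε+3)³. In particular, g'(θ₀) + h'(θ₀)·m² ≥ 0 whenever m² ≤ Ψ(ε). -/
/-- At the left endpoint `θ₀ = (e^ε+1)/2` of the feasible range, the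
derivative `g'(θ₀) + h'(θ₀)·m²` of the approximate mean-estimation error of
PCKV-UE equals `(16(e^ε+3)/(e^ε−1)³)·(Ψ(ε) − m²)` with
`Ψ(ε) = (e^ε+1)(3e^{2ε}+12e^ε+1)/(e^ε+3)³`; in particular it is nonnegative
whenever `m² ≤ Ψ(ε)`. -/
theorem pckv_ue_endpoint_derivative (ε : ℝ) (hε : 0 < ε) (θ₀ : ℝ)
    (hθ₀ : θ₀ = (Real.exp ε + 1) / 2) (m : ℝ) :
    4 * θ₀ * (θ₀^2 + (θ₀ + 2) * Real.exp ε) /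
        ((θ₀ + 1)^2 * (Real.exp ε - θ₀)^3) +
      (-(4 * (θ₀ + 1)) / (θ₀ - 1)^3) * m^2
    = (16 * (Real.exp ε + 3) / (Real.exp ε - 1)^3) *
        ((Real.exp ε + 1) * (3 * Real.exp (2*ε) + 12 * Real.exp ε + 1) /
          (Real.exp ε + 3)^3 - m^2) ∧
    (m^2 ≤ (Real.exp ε + 1) * (3 * Real.exp (2*ε) + 12 * Real.exp ε + 1) /
          (Real.exp ε + 3)^3 →
      0 ≤ 4 * θ₀ * (θ₀^2 + (θ₀ + 2) * Real.exp ε) /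
            ((θ₀ + 1)^2 * (Real.exp ε - θ₀)^3) +
          (-(4 * (θ₀ + 1)) / (θ₀ - 1)^3) * m^2) := by
  have hE : 1 < Real.exp ε := by
    have := Real.exp_lt_exp.mpr hε
    simpa using this
  have h2 : Real.exp (2*ε) = Real.exp ε ^ 2 := by
    rw [two_mul, Real.exp_add]; ring
  have h1 : Real.exp ε - 1 ≠ 0 := by linarith
  have h3 : Real.exp ε + 3 ≠ 0 := by linarith
  have h4 : Real.exp ε + 1 ≠ 0 := by linarith
  have heq : 4 * θ₀ * (θ₀^2 + (θ₀ + 2) * Real.exp ε) /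
        ((θ₀ + 1)^2 * (Real.exp ε - θ₀)^3) +
      (-(4 * (θ₀ + 1)) / (θ₀ - 1)^3) * m^2
    = (16 * (Real.exp ε + 3) / (Real.exp ε - 1)^3) *
        ((Real.exp ε + 1) * (3 * Real.exp (2*ε) + 12 * Real.exp ε + 1) /
          (Real.exp ε + 3)^3 - m^2) := by
    set E := Real.exp ε with hEdef
    subst hθ₀
    rw [h2]
    have hE1 : (0:ℝ) < E - 1 := by linarith
    have hE3 : (0:ℝ) < E + 3 := by linarith
    have hd1 : ((E + 1) / 2 + 1) ^ 2 * (E - (E + 1) / 2) ^ 3 ≠ 0 := by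
      have h6 : E - (E + 1) / 2 = (E - 1) / 2 := by ring
      rw [h6]; positivity
    have hd2 : ((E + 1) / 2 - 1) ^ 3 ≠ 0 := by
      have h7 : (E + 1) / 2 - 1 = (E - 1) / 2 := by ring
      rw [h7]; positivity
    have hd3 : (E + 3) ^ 2 * (E - 1) ^ 3 ≠ 0 := by positivity
    have hd4 : (E - 1) ^ 3 ≠ 0 := by positivity
    have L1 : 4 * ((E + 1) / 2) * (((E + 1) / 2) ^ 2 + ((E + 1) / 2 + 2) * E) /
        (((E + 1) / 2 + 1) ^ 2 * (E - (E + 1) / 2) ^ 3)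
        = 16 * (E + 1) * (3 * E ^ 2 + 12 * E + 1) / ((E + 3) ^ 2 * (E - 1) ^ 3) := by
      rw [div_eq_div_iff hd1 hd3]; ring
    have L2 : -(4 * ((E + 1) / 2 + 1)) / ((E + 1) / 2 - 1) ^ 3
        = -(16 * (E + 3)) / (E - 1) ^ 3 := by
      rw [div_eq_div_iff hd2 hd4]; ring
    have R : 16 * (E + 3) / (E - 1) ^ 3 *
        ((E + 1) * (3 * E ^ 2 + 12 * E + 1) / (E + 3) ^ 3 - m ^ 2)
        = 16 * (E + 1) * (3 * E ^ 2 + 12 * E + 1) / ((E + 3) ^ 2 * (E - 1) ^ 3)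
          + -(16 * (E + 3)) / (E - 1) ^ 3 * m ^ 2 := by
      have h3' : (E + 3) ≠ 0 := ne_of_gt hE3
      have h1' : (E - 1) ≠ 0 := ne_of_gt hE1
      field_simp
      ring
    rw [L1, L2, R]
  refine ⟨heq, fun hm => ?_⟩
  rw [heq]
  apply mul_nonneg
  · apply div_nonneg
    · linarith
    · have : (0:ℝ) < Real.exp ε - 1 := by linarith
      positivity
  · linarith
end

section
/- For all ε > 0, the function Ψ(ε) = (e^ε+1)(3e^{2ε}+12e^ε+1)/(e^ε+3)³ satisfies 1/2 < Ψ(ε) < 3. -/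
/-- The function `Ψ(ε) = (e^ε+1)(3e^{2ε}+12e^ε+1)/(e^ε+3)³` arising in the
optimized budget allocation of PCKV-UE satisfies `1/2 < Ψ(ε) < 3` for all
`ε > 0`. -/
theorem psi_bounds (ε : ℝ) (hε : 0 < ε) :
    1/2 < (Real.exp ε + 1) * (3 * Real.exp (2*ε) + 12 * Real.exp ε + 1) /
        (Real.exp ε + 3)^3 ∧
    (Real.exp ε + 1) * (3 * Real.exp (2*ε) + 12 * Real.exp ε + 1) /
        (Real.exp ε + 3)^3 < 3 := by
  have hx : 1 < Real.exp ε := Real.one_lt_exp_iff.mpr hε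
  set x := Real.exp ε with hxdef
  have h2 : Real.exp (2*ε) = x^2 := by rw [two_mul, Real.exp_add]; ring
  have hpos : 0 < (x + 3)^3 := by positivity
  rw [h2]
  constructor
  · rw [lt_div_iff₀ hpos]
    nlinarith [sq_nonneg (x - 1), sq_nonneg x, hx]
  · rw [div_lt_iff₀ hpos]
    nlinarith [sq_nonneg x, hx]
end

section
/- Fix ε > 0, integers d ≥ 1 and ℓ ≥ 1, let d' = d + ℓ, L = ℓ(e^ε − 1), and θ* = L/2 + 1. Define g₁(θ) = ((e^ε+1)/(e^ε−1))²·(θ + d' − 1)/(θ + ℓ − 1)² and g₂(θ) = (θ + d' − 1)/(L − (θ − 1))². Then g₁ is strictly decreasing on (1, θ*], g₂ is strictly increasing on [θ*, L + 1), and g₁(θ*) = g₂(θ*); consequently the piecewise function equal to g₁ on (1, θ*] and to g₂ on [θ*, L + 1) attains its minimum over (1, L + 1) at θ = θ*. -/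
/-- Optimized budget allocation of PCKV-GRR: with `d' = d + ℓ`,
`L = ℓ(e^ε − 1)` and `θ* = L/2 + 1`, the piece
`g₁(θ) = ((e^ε+1)/(e^ε−1))²·(θ + d' − 1)/(θ + ℓ − 1)²` is strictly decreasing
on `(1, θ*]`, the piece `g₂(θ) = (θ + d' − 1)/(L − (θ − 1))²` is strictly
increasing on `[θ*, L+1)`, they agree at `θ*`, and hence the piecewise
function attains its minimum over `(1, L+1)` at `θ = θ*`. -/
theorem pckv_grr_g_min_at_thetastar (ε : ℝ) (hε : 0 < ε) (d ℓ : ℕ)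
    (hd : 1 ≤ d) (hℓ : 1 ≤ ℓ) (d' : ℕ) (hd' : d' = d + ℓ)
    (L θs : ℝ) (hL : L = (ℓ : ℝ) * (Real.exp ε - 1)) (hθs : θs = L / 2 + 1)
    (g₁ g₂ : ℝ → ℝ)
    (hg₁ : g₁ = fun θ => ((Real.exp ε + 1) / (Real.exp ε - 1))^2 *
      ((θ + (d' : ℝ) - 1) / (θ + (ℓ : ℝ) - 1)^2))
    (hg₂ : g₂ = fun θ => (θ + (d' : ℝ) - 1) / (L - (θ - 1))^2) :
    StrictAntiOn g₁ (Set.Ioc 1 θs) ∧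
    StrictMonoOn g₂ (Set.Ico θs (L + 1)) ∧
    g₁ θs = g₂ θs ∧
    ∀ θ ∈ Set.Ioo (1 : ℝ) (L + 1),
      g₁ θs ≤ (if θ ≤ θs then g₁ θ else g₂ θ) := by
  have hE : 1 < Real.exp ε := by
    have := Real.exp_lt_exp.2 hε
    simpa using this
  have hℓR : (1:ℝ) ≤ (ℓ:ℝ) := by exact_mod_cast hℓ
  have hdR : (1:ℝ) ≤ (d:ℝ) := by exact_mod_cast hd
  have hd'R : (d':ℝ) = (d:ℝ) + (ℓ:ℝ) := by exact_mod_cast hd'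
  have hL0 : 0 < L := by
    rw [hL]; exact mul_pos (by linarith) (by linarith)
  have hθs1 : 1 < θs := by rw [hθs]; linarith
  have hθsL : θs < L + 1 := by rw [hθs]; linarith
  have hC2 : 0 < ((Real.exp ε + 1) / (Real.exp ε - 1))^2 :=
    pow_pos (div_pos (by linarith) (by linarith)) 2
  have H1 : StrictAntiOn g₁ (Set.Ioc 1 θs) := by
    intro a ha b hb hab
    subst hg₁
    simp only
    have ha1 : 1 < a := ha.1
    have hb1 : 1 < b := hb.1
    have hda : (0:ℝ) < (a + ℓ - 1)^2 := pow_pos (by linarith) 2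
    have hdb : (0:ℝ) < (b + ℓ - 1)^2 := pow_pos (by linarith) 2
    apply mul_lt_mul_of_pos_left _ hC2
    rw [div_lt_div_iff₀ hdb hda]
    have key : 0 < (b - a) * (a*b - ((ℓ:ℝ)-1)^2 + (((d':ℝ))-1)*(a+b)
        + 2*(((d':ℝ))-1)*((ℓ:ℝ)-1)) := by
      apply mul_pos (by linarith)
      rw [hd'R]
      nlinarith [mul_nonneg (show (0:ℝ) ≤ (ℓ:ℝ)-1 by linarith)
        (show (0:ℝ) ≤ 2*(d:ℝ)+(ℓ:ℝ)-1 by linarith), mul_pos (by linarith : (0:ℝ) < a) (by linarith : (0:ℝ) < b)]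
    have expand : (a + (d':ℝ) - 1) * (b + (ℓ:ℝ) - 1)^2
        - (b + (d':ℝ) - 1) * (a + (ℓ:ℝ) - 1)^2
        = (b - a) * (a*b - ((ℓ:ℝ)-1)^2 + (((d':ℝ))-1)*(a+b)
        + 2*(((d':ℝ))-1)*((ℓ:ℝ)-1)) := by ring
    linarith [key, expand]
  have H2 : StrictMonoOn g₂ (Set.Ico θs (L + 1)) := by
    intro a ha b hb hab
    subst hg₂
    simp only
    have hbL : b < L + 1 := hb.2
    have haL : a < L + 1 := ha.2
    have ha1 : 1 < a := lt_of_lt_of_le hθs1 ha.1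
    have hda : (0:ℝ) < (L - (a - 1))^2 := pow_pos (by linarith) 2
    have hdb : (0:ℝ) < (L - (b - 1))^2 := pow_pos (by linarith) 2
    rw [div_lt_div_iff₀ hda hdb]
    have key : 0 < (b - a) * ((L + (d':ℝ)) * (2*L + 2 - a - b) - (L + 1 - a)*(L + 1 - b)) := by
      apply mul_pos (by linarith)
      nlinarith [mul_pos (show (0:ℝ) < L + 1 - b by linarith)
        (show (0:ℝ) < (d':ℝ) - 1 + a by rw [hd'R]; linarith),
        mul_pos (show (0:ℝ) < L + (d':ℝ) by rw [hd'R]; linarith)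
        (show (0:ℝ) < L + 1 - a by linarith)]
    have expand : (b + (d':ℝ) - 1) * (L - (a - 1))^2
        - (a + (d':ℝ) - 1) * (L - (b - 1))^2
        = (b - a) * ((L + (d':ℝ)) * (2*L + 2 - a - b) - (L + 1 - a)*(L + 1 - b)) := by
      ring
    linarith [key, expand]
  have H3 : g₁ θs = g₂ θs := by
    subst hg₁ hg₂
    simp only
    have e1 : θs + (ℓ:ℝ) - 1 = (ℓ:ℝ) * (Real.exp ε + 1) / 2 := by
      rw [hθs, hL]; ring
    have e2 : L - (θs - 1) = (ℓ:ℝ) * (Real.exp ε - 1) / 2 := by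
      rw [hθs, hL]; ring
    have h1 : Real.exp ε - 1 ≠ 0 := by linarith
    have h2 : (ℓ:ℝ) ≠ 0 := by linarith
    have h3 : (ℓ:ℝ) * (Real.exp ε + 1) / 2 ≠ 0 := by
      apply div_ne_zero _ two_ne_zero
      exact mul_ne_zero h2 (by linarith)
    have h4 : (ℓ:ℝ) * (Real.exp ε - 1) / 2 ≠ 0 :=
      div_ne_zero (mul_ne_zero h2 h1) two_ne_zero
    rw [e1, e2, mul_div_assoc', div_eq_div_iff (by positivity) (by positivity)]
    field_simp
  refine ⟨H1, H2, H3, ?_⟩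
  intro θ hθ
  by_cases h : θ ≤ θs
  · simp only [if_pos h]
    rcases eq_or_lt_of_le h with rfl | hlt
    · exact le_refl _
    · exact le_of_lt (H1 ⟨hθ.1, h⟩ ⟨hθs1, le_refl _⟩ hlt)
  · simp only [if_neg h]
    rw [H3]
    exact le_of_lt (H2 ⟨le_refl _, hθsL⟩ ⟨le_of_lt (lt_of_not_ge h), hθ.2⟩ (lt_of_not_ge h))
end

section
/- Fix ε > 0 and ℓ ≥ 1, and let L = ℓ(e^ε − 1), ε₁ = ln(L/2 + 1), ε₂ = ln(L + 1), λ = (ℓ−1)(e^{ε₂}+1)/2. Then e^{ε₁} = (e^{ε₂}+1)/2 and ln((e^{ε₁+ε₂} + λ)/(min{e^{ε₁}, (e^{ε₂}+1)/2} + λ)) = ε; i.e., the optimized allocation ε₁ = ln(ℓ(e^ε−1)/2 + 1), ε₂ = ln(ℓ(e^ε−1) + 1) exactly exhausts the total budget ε under the tight budget composition of PCKV-GRR. -/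
/-- The optimized budget allocation `ε₁ = ln(ℓ(e^ε−1)/2 + 1)`,
`ε₂ = ln(ℓ(e^ε−1) + 1)` of PCKV-GRR satisfies `e^{ε₁} = (e^{ε₂}+1)/2` and
exactly exhausts the total budget `ε` under the tight budget composition
`ln((e^{ε₁+ε₂} + λ)/(min {e^{ε₁}, (e^{ε₂}+1)/2} + λ))` with
`λ = (ℓ−1)(e^{ε₂}+1)/2`. -/
theorem pckv_grr_optimized_allocation (ε : ℝ) (hε : 0 < ε) (ℓ : ℕ) (hℓ : 1 ≤ ℓ)
    (L ε₁ ε₂ lam : ℝ)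
    (hL : L = (ℓ : ℝ) * (Real.exp ε - 1))
    (hε₁ : ε₁ = Real.log (L / 2 + 1))
    (hε₂ : ε₂ = Real.log (L + 1))
    (hlam : lam = ((ℓ : ℝ) - 1) * (Real.exp ε₂ + 1) / 2) :
    Real.exp ε₁ = (Real.exp ε₂ + 1) / 2 ∧
    Real.log ((Real.exp (ε₁ + ε₂) + lam) /
        (min (Real.exp ε₁) ((Real.exp ε₂ + 1) / 2) + lam)) = ε := by
  have hℓ1 : (1 : ℝ) ≤ (ℓ : ℝ) := by exact_mod_cast hℓ
  have hℓ0 : (0 : ℝ) < (ℓ : ℝ) := lt_of_lt_of_le one_pos hℓ1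
  have hLpos : 0 < L := by
    rw [hL]
    exact mul_pos hℓ0 (by nlinarith [Real.add_one_le_exp ε])
  have he1 : Real.exp ε₁ = L / 2 + 1 := by
    rw [hε₁, Real.exp_log (by linarith)]
  have he2 : Real.exp ε₂ = L + 1 := by
    rw [hε₂, Real.exp_log (by linarith)]
  have hmin : (Real.exp ε₂ + 1) / 2 = L / 2 + 1 := by rw [he2]; ring
  have heq : Real.exp ε₁ = (Real.exp ε₂ + 1) / 2 := by rw [he1, hmin]
  refine ⟨heq, ?_⟩
  rw [min_eq_left heq.le, Real.exp_add, he1, he2, hlam, he2]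
  have hden : L / 2 + 1 + ((ℓ : ℝ) - 1) * (L + 1 + 1) / 2 = (ℓ : ℝ) * (L + 2) / 2 := by
    ring
  have hnum : (L / 2 + 1) * (L + 1) + ((ℓ : ℝ) - 1) * (L + 1 + 1) / 2
      = (L + 2) * (L + (ℓ : ℝ)) / 2 := by ring
  rw [hnum, hden]
  have hdpos : (0 : ℝ) < (ℓ : ℝ) * (L + 2) / 2 := by positivity
  have : (L + 2) * (L + (ℓ : ℝ)) / 2 / ((ℓ : ℝ) * (L + 2) / 2) = Real.exp ε := by
    rw [div_eq_iff (ne_of_gt hdpos), hL]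
    ring
  rw [this, Real.log_exp]
end

section
/- Fix ε > 0 and let θ ∈ [(e^ε+1)/2, e^ε). Set ε₁ = ln θ and ε₂ = ln(1/(2θe^{−ε} − 1)). Then 0 < ε₂ ≤ ε, ε₁ + ln(2/(1 + e^{−ε₂})) = ε, and max{ε₂, ε₁ + ln(2/(1 + e^{−ε₂}))} = ε; i.e., every such pair (ε₁, ε₂) exactly attains the total budget ε under the tight budget composition of PCKV-UE, with ε₁ maximal given ε and ε₂. -/
/-- The parametrization `ε₁ = ln θ`, `ε₂ = ln(1/(2θe^{−ε} − 1))` for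
`θ ∈ [(e^ε+1)/2, e^ε)` of PCKV-UE budget allocations satisfies `0 < ε₂ ≤ ε`,
`ε₁ + ln(2/(1 + e^{−ε₂})) = ε`, and exactly attains the total budget `ε`
under the tight budget composition `max {ε₂, ε₁ + ln(2/(1 + e^{−ε₂}))}`. -/
theorem pckv_ue_budget_parametrization (ε θ : ℝ) (hε : 0 < ε)
    (hθ : θ ∈ Set.Ico ((Real.exp ε + 1) / 2) (Real.exp ε))
    (ε₁ ε₂ : ℝ)
    (hε₁ : ε₁ = Real.log θ)
    (hε₂ : ε₂ = Real.log (1 / (2 * θ * Real.exp (-ε) - 1))) :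
    0 < ε₂ ∧ ε₂ ≤ ε ∧
    ε₁ + Real.log (2 / (1 + Real.exp (-ε₂))) = ε ∧
    max ε₂ (ε₁ + Real.log (2 / (1 + Real.exp (-ε₂)))) = ε := by
  obtain ⟨hθ1, hθ2⟩ := hθ
  have hexp : (0:ℝ) < Real.exp ε := Real.exp_pos ε
  have hexpneg : (0:ℝ) < Real.exp (-ε) := Real.exp_pos _
  set t : ℝ := 2 * θ * Real.exp (-ε) - 1 with ht
  have htlb : Real.exp (-ε) ≤ t := by
    have h : (Real.exp ε + 1) * Real.exp (-ε) ≤ 2 * θ * Real.exp (-ε) := by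
      nlinarith
    have h2 : (Real.exp ε + 1) * Real.exp (-ε) = 1 + Real.exp (-ε) := by
      rw [add_mul, ← Real.exp_add]
      simp
    linarith
  have ht0 : 0 < t := lt_of_lt_of_le hexpneg htlb
  have htub : t < 1 := by
    have h : 2 * θ * Real.exp (-ε) < 2 * Real.exp ε * Real.exp (-ε) := by
      nlinarith
    have h2 : Real.exp ε * Real.exp (-ε) = 1 := by
      rw [← Real.exp_add]; simp
    nlinarith
  have hε₂' : ε₂ = - Real.log t := by
    rw [hε₂, one_div, Real.log_inv]
  have h1 : 0 < ε₂ := by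
    rw [hε₂']
    have := Real.log_neg ht0 htub
    linarith
  have h2 : ε₂ ≤ ε := by
    rw [hε₂']
    have : Real.log (Real.exp (-ε)) ≤ Real.log t :=
      Real.log_le_log hexpneg htlb
    rw [Real.log_exp] at this
    linarith
  have hexpε₂ : Real.exp (-ε₂) = t := by
    rw [hε₂', neg_neg, Real.exp_log ht0]
  have hθ0 : 0 < θ := by nlinarith
  have h3 : ε₁ + Real.log (2 / (1 + Real.exp (-ε₂))) = ε := by
    rw [hexpε₂, hε₁]
    have h1t : 1 + t = 2 * θ * Real.exp (-ε) := by rw [ht]; ring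
    rw [h1t]
    have : (2 : ℝ) / (2 * θ * Real.exp (-ε)) = Real.exp ε / θ := by
      rw [eq_div_iff (ne_of_gt hθ0)]
      have hee : Real.exp ε * Real.exp (-ε) = 1 := by
        rw [← Real.exp_add]; simp
      field_simp
      nlinarith [hee]
    rw [this, Real.log_div (ne_of_gt hexp) (ne_of_gt hθ0), Real.log_exp]
    ring
  exact ⟨h1, h2, h3, by rw [h3]; exact max_eq_right h2⟩
end
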